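/- Let κ be an infinite cardinal and let ⟨C_δ : δ < κ⁺⟩ be a □_κ-sequence: for each limit δ < κ⁺, C_δ is a club in δ of order type at most κ, and C_α = C_δ ∩ α whenever α is a limit point of C_δ. Then there exists a sequence ⟨f_δ : δ < κ⁺⟩ of functions f_δ : C_δ → δ such that (a) f_γ = f_δ ↾ γ whenever γ is a limit point of C_δ, and (b) f_δ is onto δ whenever otp(C_δ) = κ. -/

import Mathlib

open Cardinal

universe u

/-- The order type of a set of ordinals (one universe up). -/
noncomputable def otp (s : Set Ordinal.{u}) : Ordinal.{u + 1} :=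
  @Ordinal.type s (Subrel ((· < ·) : Ordinal.{u} → Ordinal.{u} → Prop) s)
    (inferInstanceAs (IsWellOrder s (Subrel ((· < ·) : Ordinal.{u} → Ordinal.{u} → Prop) (· ∈ s))))

/-- `C` is unbounded in (cofinal below) `x`. -/
def UnbddBelow (C : Set Ordinal.{u}) (x : Ordinal.{u}) : Prop :=
  ∀ β < x, ∃ α ∈ C, β < α ∧ α < x

/-- The set `Cₙᵗ = {α < l : t α ≤ n}`. -/
def Ct (t : Ordinal.{u} → ℕ) (l : Ordinal.{u}) (n : ℕ) : Set Ordinal.{u} :=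
  {α | α < l ∧ t α ≤ n}

/-- Membership in `𝕊_κ`: `t` has domain a successor ordinal `l < κ⁺`, each `Cₙᵗ` is
closed, at limit ordinals `t` takes the least value `n` with `Cₙᵗ` unbounded below, and
every interval disjoint from `Cₙ₋₁ᵗ` meets `Cₙᵗ` in a set of order type `< κ·ω`. -/
def InSkappa (κ : Cardinal.{u}) (l : Ordinal.{u}) (t : Ordinal.{u} → ℕ) : Prop :=
  (∃ δ, l = δ + 1) ∧ l < (Order.succ κ).ord ∧
  (∀ n : ℕ, ∀ x < l, Order.IsSuccLimit x → UnbddBelow (Ct t l n) x → t x ≤ n) ∧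
  (∀ x < l, Order.IsSuccLimit x →
    UnbddBelow (Ct t l (t x)) x ∧ ∀ m : ℕ, UnbddBelow (Ct t l m) x → t x ≤ m) ∧
  (∀ n : ℕ, ∀ I : Set Ordinal.{u}, I ⊆ Set.Iio l → I.OrdConnected →
    (∀ x ∈ I, n ≤ t x) →
    otp (Ct t l n ∩ I) < Ordinal.lift.{u + 1} (κ.ord * Ordinal.omega0))

/-- `α` is an accumulation point of `C` belonging to `C`. -/
def IsAccPt (C : Set Ordinal.{u}) (α : Ordinal.{u}) : Prop :=
  α ∈ C ∧ UnbddBelow C α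

/-!
Fix injections `e γ : γ → κ` for `γ < κ⁺` and a map `P : κ → κ × κ` all of whose fibres are
cofinal in `κ`. The value `f_δ(β)` depends only on `D = C_δ ∩ β`: if `P (otp D) = (j, ξ)` and
`γ` is the element of `D` of rank `ξ`, then `f_δ(β)` is the `α < γ` with `e γ α = j`.
Coherence is then immediate, as `C_γ ∩ β = C_δ ∩ β` for `β ∈ C_γ`. If `otp C_δ = κ` and
`α < γ ∈ C_δ`, where `γ` has rank `ξ`, some rank `i > ξ` below `κ` has `P i = (e γ α, ξ)`, and the
element `β` of `C_δ` of rank `i` has `f_δ(β) = α`.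
-/

open Set

instance (s : Set Ordinal.{u}) : IsWellOrder s (Subrel (· < ·) s) :=
  inferInstanceAs (IsWellOrder s (Subrel (· < ·) (· ∈ s)))

theorem otp_inter_Iio_eq_typein {D : Set Ordinal.{u}} {β : Ordinal.{u}} (hβ : β ∈ D) :
    otp (D ∩ Iio β) = @Ordinal.typein D (Subrel (· < ·) D) _ ⟨β, hβ⟩ := by
  rw [← Ordinal.type_subrel]
  exact RelIso.ordinalType_congr
    { toFun x := ⟨⟨x.1, x.2.1⟩, x.2.2⟩
      invFun y := ⟨y.1.1, y.1.2, y.2⟩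
      map_rel_iff' := Iff.rfl }

theorem otp_inter_Iio_lt_otp {D : Set Ordinal.{u}} {β : Ordinal.{u}} (hβ : β ∈ D) :
    otp (D ∩ Iio β) < otp D := by
  rw [otp_inter_Iio_eq_typein hβ]
  exact Ordinal.typein_lt_type _ _

theorem strictMonoOn_otp_inter_Iio (D : Set Ordinal.{u}) :
    StrictMonoOn (fun β => otp (D ∩ Iio β)) D := by
  intro γ hγ β hβ h
  simpa only [otp_inter_Iio_eq_typein hγ, otp_inter_Iio_eq_typein hβ, Ordinal.typein_lt_typein]

theorem exists_otp_inter_Iio_eq {D : Set Ordinal.{u}} {i : Ordinal.{u + 1}} (hi : i < otp D) :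
    ∃ β ∈ D, otp (D ∩ Iio β) = i := by
  obtain ⟨⟨β, hβ⟩, rfl⟩ := Ordinal.typein_surj _ hi
  exact ⟨β, hβ, otp_inter_Iio_eq_typein hβ⟩

theorem inter_Iio_inter_Iio_of_le (D : Set Ordinal.{u}) {β γ : Ordinal.{u}} (h : β ≤ γ) :
    D ∩ Iio γ ∩ Iio β = D ∩ Iio β := by
  rw [inter_assoc, Iio_inter_Iio, inf_eq_right.2 h]

theorem exists_mem_gt_of_lift_le_mk {c : Cardinal.{v}} (hc : ℵ₀ ≤ c) {s : Set Ordinal.{v}}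
    (hs : Cardinal.lift.{v + 1} c ≤ #s) {η : Ordinal.{v}} (hη : η < c.ord) : ∃ x ∈ s, η < x := by
  by_contra! h
  have hsub : s ⊆ Iio (Order.succ η) := fun x hx => Order.lt_succ_iff.2 (h x hx)
  have := hs.trans (Cardinal.mk_le_mk_of_subset hsub)
  rw [Cardinal.mk_Iio_ordinal, Cardinal.lift_le] at this
  exact this.not_gt (Cardinal.lt_ord.1 ((Cardinal.isSuccLimit_ord hc).succ_lt hη))

def IsCofinalPairing (P : Ordinal.{v} → Ordinal.{v} × Ordinal.{v}) (o : Ordinal.{v}) : Prop :=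
  ∀ j < o, ∀ ξ < o, ∀ η < o, ∃ i < o, η < i ∧ P i = (j, ξ)

theorem Cardinal.exists_isCofinalPairing {c : Cardinal.{v}} (hc : ℵ₀ ≤ c) :
    ∃ P, IsCofinalPairing P c.ord := by
  have hS : #(Iio c.ord) = Cardinal.lift.{v + 1} c := by
    rw [Cardinal.mk_Iio_ordinal, Cardinal.card_ord]
  obtain ⟨E⟩ : Nonempty (Iio c.ord ≃ Iio c.ord × Iio c.ord × Iio c.ord) := by
    rw [← Cardinal.eq, Cardinal.mk_prod, Cardinal.mk_prod, Cardinal.lift_id, Cardinal.lift_id, hS,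
      Cardinal.mul_eq_self (Cardinal.aleph0_le_lift.2 hc),
      Cardinal.mul_eq_self (Cardinal.aleph0_le_lift.2 hc)]
  refine ⟨fun i => if h : i ∈ Iio c.ord then ((E ⟨i, h⟩).1, (E ⟨i, h⟩).2.1) else (0, 0), ?_⟩
  intro j hj ξ hξ η hη
  set fiber := fun z => (E.symm (⟨j, hj⟩, ⟨ξ, hξ⟩, z) : Ordinal.{v})
  have hfiber : Function.Injective fiber := fun z z' h => by
    simpa using E.symm.injective (Subtype.ext h)
  obtain ⟨_, ⟨z, rfl⟩, hz⟩ := exists_mem_gt_of_lift_le_mk hc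
    (hS ▸ (Cardinal.mk_range_eq fiber hfiber).ge) hη
  refine ⟨fiber z, (E.symm _).2, hz, ?_⟩
  dsimp only [fiber]
  rw [dif_pos (E.symm _).2]
  simp

theorem Cardinal.exists_injOn_Iio_ord (κ : Cardinal.{u}) :
    ∃ e : Ordinal.{u} → Ordinal.{u} → Ordinal.{u}, ∀ γ, γ.card ≤ κ →
      MapsTo (e γ) (Iio γ) (Iio κ.ord) ∧ InjOn (e γ) (Iio γ) := by
  have (γ : Ordinal.{u}) : ∃ g : Ordinal.{u} → Ordinal.{u}, γ.card ≤ κ →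
      MapsTo g (Iio γ) (Iio κ.ord) ∧ InjOn g (Iio γ) := by
    by_cases hγ : γ.card ≤ κ
    · obtain ⟨emb⟩ : Nonempty (Iio γ ↪ Iio κ.ord) := by
        rw [← Cardinal.le_def, Cardinal.mk_Iio_ordinal, Cardinal.mk_Iio_ordinal,
          Cardinal.lift_le, Cardinal.card_ord]
        exact hγ
      refine ⟨fun α => if h : α < γ then emb ⟨α, h⟩ else 0, fun _ => ⟨?_, ?_⟩⟩
      · intro α (hα : α < γ)
        simpa only [dif_pos hα] using (emb ⟨α, hα⟩).2
      · intro α (hα : α < γ) α' (hα' : α' < γ) h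
        simp only [dif_pos hα, dif_pos hα'] at h
        exact congrArg Subtype.val (emb.injective (Subtype.ext h))
    · exact ⟨id, fun h => absurd h hγ⟩
  choose e he using this
  exact ⟨e, he⟩

section Decoding

variable (e : Ordinal.{u} → Ordinal.{u} → Ordinal.{u})
  (P : Ordinal.{u + 1} → Ordinal.{u + 1} × Ordinal.{u + 1})

open Classical in
noncomputable def rankDecode (D : Set Ordinal.{u}) : Ordinal.{u} :=
  if h : ∃ α, ∃ γ ∈ D, α < γ ∧ P (otp D) = (Ordinal.lift.{u + 1} (e γ α), otp (D ∩ Iio γ))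
  then h.choose else 0

theorem rankDecode_lt {D : Set Ordinal.{u}} {δ : Ordinal.{u}} (hD : D ⊆ Iio δ) (hδ : 0 < δ) :
    rankDecode e P D < δ := by
  unfold rankDecode
  split_ifs with h
  · obtain ⟨γ, hγ, hαγ, -⟩ := h.choose_spec
    exact hαγ.trans (hD hγ)
  · exact hδ

theorem rankDecode_eq {D : Set Ordinal.{u}} {γ α : Ordinal.{u}} (hγ : γ ∈ D) (hαγ : α < γ)
    (hinj : InjOn (e γ) (Iio γ))
    (hP : P (otp D) = (Ordinal.lift.{u + 1} (e γ α), otp (D ∩ Iio γ))) :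
    rankDecode e P D = α := by
  have hex : ∃ α, ∃ γ ∈ D, α < γ ∧ P (otp D) = (Ordinal.lift.{u + 1} (e γ α), otp (D ∩ Iio γ)) :=
    ⟨α, γ, hγ, hαγ, hP⟩
  rw [rankDecode, dif_pos hex]
  obtain ⟨γ', hγ', hαγ', hP'⟩ := hex.choose_spec
  obtain ⟨he, hotp⟩ := Prod.mk.inj (hP'.symm.trans hP)
  obtain rfl : γ' = γ := (strictMonoOn_otp_inter_Iio D).injOn hγ' hγ hotp
  exact hinj hαγ' hαγ (Ordinal.lift_inj.1 he)

theorem exists_rankDecode_eq {D : Set Ordinal.{u}} (hP : IsCofinalPairing P (otp D))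
    {γ α : Ordinal.{u}} (hγ : γ ∈ D) (hαγ : α < γ) (he : Ordinal.lift.{u + 1} (e γ α) < otp D)
    (hinj : InjOn (e γ) (Iio γ)) : ∃ β ∈ D, rankDecode e P (D ∩ Iio β) = α := by
  have hξ := otp_inter_Iio_lt_otp hγ
  obtain ⟨i, hi, hξi, hPi⟩ := hP _ he _ hξ _ hξ
  obtain ⟨β, hβ, rfl⟩ := exists_otp_inter_Iio_eq hi
  have hγβ : γ < β := ((strictMonoOn_otp_inter_Iio D).lt_iff_lt hγ hβ).1 hξi
  refine ⟨β, hβ, rankDecode_eq e P ⟨hγ, hγβ⟩ hαγ hinj ?_⟩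
  rw [hPi, inter_Iio_inter_Iio_of_le D hγβ.le]

end Decoding

/-- Rinot's lemma: from a `□_κ`-sequence `⟨C_δ : δ < κ⁺⟩` one can construct functions
`f_δ : C_δ → δ` which cohere on accumulation points and are onto `δ` whenever
`otp(C_δ) = κ`. -/
theorem stmt16 (κ : Cardinal.{u}) (hκ : ℵ₀ ≤ κ) (C : Ordinal.{u} → Set Ordinal.{u})
    (hsq : ∀ δ < (Order.succ κ).ord, Order.IsSuccLimit δ →
      (C δ ⊆ Set.Iio δ ∧ UnbddBelow (C δ) δ ∧
        (∀ x < δ, Order.IsSuccLimit x → UnbddBelow (C δ) x → x ∈ C δ)) ∧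
      otp (C δ) ≤ Ordinal.lift.{u + 1} κ.ord ∧
      (∀ α, IsAccPt (C δ) α → C α = C δ ∩ Set.Iio α)) :
    ∃ f : Ordinal.{u} → Ordinal.{u} → Ordinal.{u},
      ∀ δ < (Order.succ κ).ord, Order.IsSuccLimit δ →
        (∀ β ∈ C δ, f δ β < δ) ∧
        (∀ γ, IsAccPt (C δ) γ → ∀ β ∈ C γ, f γ β = f δ β) ∧
        (otp (C δ) = Ordinal.lift.{u + 1} κ.ord → ∀ α < δ, ∃ β ∈ C δ, f δ β = α) := by
  obtain ⟨e, he⟩ := Cardinal.exists_injOn_Iio_ord κ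
  obtain ⟨P, hP⟩ := Cardinal.exists_isCofinalPairing (Cardinal.aleph0_le_lift.{u, u + 1}.2 hκ)
  refine ⟨fun δ β => rankDecode e P (C δ ∩ Iio β), fun δ hδ hδlim => ?_⟩
  obtain ⟨⟨hsub, hunb, -⟩, -, hcoh⟩ := hsq δ hδ hδlim
  refine ⟨fun β _ => rankDecode_lt e P (inter_subset_left.trans hsub) hδlim.bot_lt, ?_, ?_⟩
  · intro γ hγ β hβ
    rw [hcoh γ hγ] at hβ
    simp only [hcoh γ hγ, inter_Iio_inter_Iio_of_le _ hβ.2.le]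
  · intro hotp α hα
    obtain ⟨γ, hγ, hαγ, hγδ⟩ := hunb α hα
    obtain ⟨hmaps, hinj⟩ := he γ (Order.lt_succ_iff.1 (Cardinal.lt_ord.1 (hγδ.trans hδ)))
    rw [Cardinal.lift_ord] at hotp
    refine exists_rankDecode_eq e P (hotp ▸ hP) hγ hαγ ?_ hinj
    rw [hotp, ← Cardinal.lift_ord, Ordinal.lift_lt]
    exact hmaps hαγ
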